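/- arXiv:2507.13058 — 6 statements merged into one kernel-verified Lean document; each statement's English description precedes it below -/
import Mathlib

section
/- The natural transformation δ : P∘P ⇒ P∘P on Set, defined by δ_X(E) = { e' ⊆ ⋃E : ∀ e ∈ E, e ∩ e' ≠ ∅ } for E a set of subsets of X, is natural: for any function f : X → Y and any E ∈ P(P(X)), (P(P f))(δ_X(E)) = δ_Y((P(P f))(E)) where P f denotes direct image. -/
/-- The weak distributive law `δ : PP ⇒ PP` on `Set`. -/
def dlaw {X : Type*} (E : Set (Set X)) : Set (Set X) :=
  {e' | e' ⊆ ⋃₀ E ∧ ∀ e ∈ E, (e ∩ e').Nonempty}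

/-- Naturality of `δ`: for any `f : X → Y` and `E ∈ P(P X)`,
`(P P f)(δ_X E) = δ_Y ((P P f) E)`. -/
theorem dlaw_natural {X Y : Type*} (f : X → Y) (E : Set (Set X)) :
    Set.image (Set.image f) (dlaw E) = dlaw (Set.image (Set.image f) E) := by
  ext d
  constructor
  · rintro ⟨e', ⟨hsub, hmeet⟩, rfl⟩
    constructor
    · rintro y ⟨x, hx, rfl⟩
      obtain ⟨e, heE, hxe⟩ := hsub hx
      exact ⟨f '' e, ⟨e, heE, rfl⟩, ⟨x, hxe, rfl⟩⟩
    · rintro d' ⟨e, heE, rfl⟩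
      obtain ⟨x, hxe, hxe'⟩ := hmeet e heE
      exact ⟨f x, ⟨x, hxe, rfl⟩, ⟨x, hxe', rfl⟩⟩
  · rintro ⟨hsub, hmeet⟩
    refine ⟨f ⁻¹' d ∩ ⋃₀ E, ⟨Set.inter_subset_right, ?_⟩, ?_⟩
    · intro e heE
      obtain ⟨y, ⟨x, hxe, rfl⟩, hyd⟩ := hmeet (f '' e) ⟨e, heE, rfl⟩
      exact ⟨x, hxe, hyd, ⟨e, heE, hxe⟩⟩
    · apply Set.Subset.antisymm
      · rintro y ⟨x, ⟨hxd, _⟩, rfl⟩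
        exact hxd
      · intro y hyd
        obtain ⟨d', ⟨e, heE, rfl⟩, hy⟩ := hsub hyd
        obtain ⟨x, hxe, rfl⟩ := hy
        exact ⟨x, ⟨hyd, ⟨e, heE, hxe⟩⟩, rfl⟩
end

section
/- Let 𝒱 be the functor on complete join-semilattices sending a complete join-semilattice L to the set of subsets of L closed under nonempty joins, with join of a family (E_i)_{i∈I} given by { ⋁_{i∈I} x_i : x_i ∈ E_i }. Then 𝒱 does not preserve decomposable morphisms: there exist finite complete join-semilattices L, M and a decomposable surjective morphism g : L → M such that 𝒱g is not decomposable, where (𝒱g)(E) = g[E] (image closure as appropriate). Concretely, with g = direct image P(4) → P(2) induced by f(0)=f(2)=0, f(1)=f(3)=1, there exist A ∈ 𝒱(P(4)) and B₁, B₂ ∈ 𝒱(P(2)) with (𝒱g)(A) = B₁ ∨ B₂ but no A₁, A₂ ∈ 𝒱(P(4)) satisfy A = A₁ ∨ A₂, (𝒱g)(A₁) = B₁, and (𝒱g)(A₂) = B₂. -/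
/-- A family of subsets closed under nonempty unions. -/
def ClosedNU {X : Type*} (A : Set (Set X)) : Prop :=
  ∀ B : Set (Set X), B.Nonempty → B ⊆ A → ⋃₀ B ∈ A

/-- Closure under nonempty unions. -/
def clNU {X : Type*} (A : Set (Set X)) : Set (Set X) :=
  {s | ∃ B : Set (Set X), B.Nonempty ∧ B ⊆ A ∧ s = ⋃₀ B}

/-- The function `f : {0,1,2,3} → {0,1}` with `f 0 = f 2 = 0`, `f 1 = f 3 = 1`. -/
def f6 : Fin 4 → Fin 2 := ![0, 1, 0, 1]

/-- The morphism `g = f* : P(4) → P(2)` of complete join-semilattices. -/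
def g6 : Set (Fin 4) → Set (Fin 2) := Set.image f6

/-- The action of the lifted powerset functor `𝒱` on `g`: closure under
nonempty unions of the elementwise image. -/
def Vg (E : Set (Set (Fin 4))) : Set (Set (Fin 2)) := clNU (g6 '' E)

/-- Binary join in `𝒱(P n)`: elementwise unions. -/
def binJoin {X : Type*} (A₁ A₂ : Set (Set X)) : Set (Set X) :=
  {s | ∃ x ∈ A₁, ∃ y ∈ A₂, s = x ∪ y}

lemma subset_clNU {X : Type*} (A : Set (Set X)) : A ⊆ clNU A := by
  intro s hs
  exact ⟨{s}, Set.singleton_nonempty s, by simpa using hs, by simp⟩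

lemma clNU_eq_self {X : Type*} {A : Set (Set X)} (h : ClosedNU A) : clNU A = A := by
  apply Set.Subset.antisymm _ (subset_clNU A)
  rintro s ⟨B, hne, hsub, rfl⟩
  exact h B hne hsub

lemma closedNU_pair {X : Type*} {s t : Set X} (h : s ⊆ t) : ClosedNU {s, t} := by
  intro B hne hsub
  by_cases ht : t ∈ B
  · have : ⋃₀ B = t := by
      apply Set.Subset.antisymm
      · apply Set.sUnion_subset
        intro u hu
        have := hsub hu
        simp only [Set.mem_insert_iff, Set.mem_singleton_iff] at this
        rcases this with rfl | rfl
        · exact h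
        · exact subset_rfl
      · exact Set.subset_sUnion_of_mem ht
    rw [this]
    exact Set.mem_insert_of_mem _ rfl
  · have hB : ∀ u ∈ B, u = s := by
      intro u hu
      have := hsub hu
      simp only [Set.mem_insert_iff, Set.mem_singleton_iff] at this
      rcases this with rfl | rfl
      · rfl
      · exact absurd hu ht
    obtain ⟨u, hu⟩ := hne
    have : ⋃₀ B = s := by
      apply Set.Subset.antisymm
      · apply Set.sUnion_subset
        intro v hv
        rw [hB v hv]
      · rw [← hB u hu]
        exact Set.subset_sUnion_of_mem hu
    rw [this]
    exact Set.mem_insert _ _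

lemma closedNU_singleton {X : Type*} (s : Set X) : ClosedNU {s} := by
  have := closedNU_pair (subset_rfl (a := s))
  rwa [Set.pair_eq_singleton] at this

/-- `𝒱` does not preserve decomposable morphisms of complete join-semilattices:
`g` is surjective and decomposable, but there are `A ∈ 𝒱(P 4)` and
`B₁, B₂ ∈ 𝒱(P 2)` with `(𝒱 g)(A) = B₁ ∨ B₂` admitting no decomposition
`A = A₁ ∨ A₂` with `(𝒱 g)(A₁) = B₁` and `(𝒱 g)(A₂) = B₂`. -/
theorem Vg_not_decomposable :
    Function.Surjective g6 ∧
    (∀ (A : Set (Fin 4)) (S : Set (Set (Fin 2))),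
      g6 A = ⋃₀ S → ∃ S' : Set (Set (Fin 4)), ⋃₀ S' = A ∧ g6 '' S' = S) ∧
    ∃ (A : Set (Set (Fin 4))) (B₁ B₂ : Set (Set (Fin 2))),
      ClosedNU A ∧ ClosedNU B₁ ∧ ClosedNU B₂ ∧
      Vg A = binJoin B₁ B₂ ∧
      ¬ ∃ (A₁ A₂ : Set (Set (Fin 4))),
          ClosedNU A₁ ∧ ClosedNU A₂ ∧ binJoin A₁ A₂ = A ∧
          Vg A₁ = B₁ ∧ Vg A₂ = B₂ := by
  have hf6 : Function.Surjective f6 := by decide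
  refine ⟨?_, ?_, ?_⟩
  · -- surjectivity of g6
    intro t
    exact ⟨f6 ⁻¹' t, Set.image_preimage_eq t hf6⟩
  · -- decomposability of g6
    intro A S hAS
    refine ⟨(fun s => A ∩ f6 ⁻¹' s) '' S, ?_, ?_⟩
    · rw [Set.sUnion_image]
      have : ⋃ s ∈ S, A ∩ f6 ⁻¹' s = A ∩ f6 ⁻¹' (⋃₀ S) := by
        ext x
        simp only [Set.mem_iUnion, Set.mem_inter_iff, Set.mem_preimage, Set.mem_sUnion]
        tauto
      rw [this, ← hAS]
      apply Set.Subset.antisymm (Set.inter_subset_left)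
      intro x hx
      exact ⟨hx, Set.mem_image_of_mem f6 hx⟩
    · rw [Set.image_image]
      have key : ∀ s ∈ S, g6 (A ∩ f6 ⁻¹' s) = s := by
        intro s hs
        show f6 '' (A ∩ f6 ⁻¹' s) = s
        rw [Set.image_inter_preimage]
        apply Set.Subset.antisymm (Set.inter_subset_right)
        intro y hy
        have hyS : y ∈ ⋃₀ S := ⟨s, hs, hy⟩
        rw [← hAS] at hyS
        exact ⟨hyS, hy⟩
      calc (fun s => g6 (A ∩ f6 ⁻¹' s)) '' S = id '' S := Set.image_congr key
        _ = S := Set.image_id S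
  · -- the counterexample
    refine ⟨{({0} : Set (Fin 4)), {0, 1, 2}}, {({0} : Set (Fin 2))}, {(∅ : Set (Fin 2)), {1}}, ?_, ?_, ?_, ?_, ?_⟩
    · exact closedNU_pair (by intro x hx; simp only [Set.mem_singleton_iff] at hx; subst hx; left; rfl)
    · exact closedNU_singleton _
    · exact closedNU_pair (Set.empty_subset _)
    · -- Vg A = binJoin B₁ B₂
      have himg : g6 '' {({0} : Set (Fin 4)), {0, 1, 2}}
          = {({0} : Set (Fin 2)), {0, 1}} := by
        rw [Set.image_pair]
        have h1 : g6 {(0 : Fin 4)} = {(0 : Fin 2)} := by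
          show f6 '' {0} = {0}
          rw [Set.image_singleton]; rfl
        have h2 : g6 {(0 : Fin 4), 1, 2} = {(0 : Fin 2), 1} := by
          show f6 '' {0, 1, 2} = {0, 1}
          ext y
          constructor
          · rintro ⟨x, hx, rfl⟩
            simp only [Set.mem_insert_iff, Set.mem_singleton_iff] at hx ⊢
            rcases hx with rfl | rfl | rfl
            · left; rfl
            · right; rfl
            · left; rfl
          · intro hy
            simp only [Set.mem_insert_iff, Set.mem_singleton_iff] at hy
            rcases hy with rfl | rfl
            · exact ⟨0, by simp, rfl⟩
            · exact ⟨1, by simp, rfl⟩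
        rw [h1, h2]
      have hchain : ({(0 : Fin 2)} : Set (Fin 2)) ⊆ {0, 1} := by
        intro x hx; simp_all
      rw [Vg, himg, clNU_eq_self (closedNU_pair hchain)]
      ext u
      simp only [binJoin, Set.mem_setOf_eq, Set.mem_insert_iff, Set.mem_singleton_iff]
      constructor
      · rintro (rfl | rfl)
        · exact ⟨{0}, rfl, ∅, Or.inl rfl, (Set.union_empty _).symm⟩
        · exact ⟨{0}, rfl, {1}, Or.inr rfl, rfl⟩
      · rintro ⟨x, rfl, y, (rfl | rfl), rfl⟩
        · left; exact Set.union_empty _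
        · right; rfl
    · -- nonexistence of decomposition
      rintro ⟨A₁, A₂, _, _, hbin, hV1, hV2⟩
      -- every member of A₁ has g6-image {0}
      have hA1 : ∀ a ∈ A₁, g6 a = {(0 : Fin 2)} := by
        intro a ha
        have : g6 a ∈ Vg A₁ := subset_clNU _ (Set.mem_image_of_mem g6 ha)
        rw [hV1] at this
        simpa using this
      -- every member of A₂ has g6-image ∅ or {1}
      have hA2 : ∀ b ∈ A₂, g6 b = ∅ ∨ g6 b = {(1 : Fin 2)} := by
        intro b hb
        have : g6 b ∈ Vg A₂ := subset_clNU _ (Set.mem_image_of_mem g6 hb)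
        rw [hV2] at this
        simpa using this
      -- ∅ ∈ A₂
      have hempty : (∅ : Set (Fin 4)) ∈ A₂ := by
        have h0 : (∅ : Set (Fin 2)) ∈ Vg A₂ := by
          rw [hV2]; exact Or.inl rfl
        obtain ⟨C, ⟨c, hc⟩, hsub, hC⟩ := h0
        have hce : c = ∅ := by
          have : c ⊆ ⋃₀ C := Set.subset_sUnion_of_mem hc
          rw [← hC] at this
          exact Set.subset_empty_iff.mp this
        obtain ⟨b, hb, hgb⟩ := hsub hc
        rw [hce] at hgb
        have : b = ∅ := Set.image_eq_empty.mp hgb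
        rwa [← this]
      -- {0,1,2} ∈ binJoin A₁ A₂
      have h012 : ({0, 1, 2} : Set (Fin 4)) ∈ binJoin A₁ A₂ := by
        rw [hbin]; right; rfl
      obtain ⟨a, ha, b, hb, heq⟩ := h012
      -- a ∈ A, so a = {0} or a = {0,1,2}
      have haA : a ∈ ({({0} : Set (Fin 4)), {0, 1, 2}} : Set (Set (Fin 4))) := by
        rw [← hbin]
        exact ⟨a, ha, ∅, hempty, (Set.union_empty _).symm⟩
      have ha0 : a = {(0 : Fin 4)} := by
        rcases haA with h | h
        · exact h
        · exfalso
          have h1a : (1 : Fin 4) ∈ a := by rw [h]; right; left; rfl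
          have : f6 1 ∈ g6 a := Set.mem_image_of_mem f6 h1a
          rw [hA1 a ha] at this
          simp only [Set.mem_singleton_iff] at this
          exact absurd this (by decide)
      -- 2 ∈ a ∪ b leads to contradiction
      have h2 : (2 : Fin 4) ∈ a ∪ b := by
        rw [← heq]; right; right; rfl
      rcases h2 with h2a | h2b
      · rw [ha0] at h2a
        simp only [Set.mem_singleton_iff] at h2a
        exact absurd h2a (by decide)
      · have : f6 2 ∈ g6 b := Set.mem_image_of_mem f6 h2b
        rcases hA2 b hb with hgb | hgb <;> rw [hgb] at this
        · exact this
        · simp only [Set.mem_singleton_iff] at this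
          exact absurd this (by decide)
end

section
/- The powerset-of-monoid functor does not preserve decomposable monoid morphisms: let f* : {a,b}* → {a}* ≅ ℕ be the monoid morphism induced by the constant map {a,b} → {a}. Then f* is decomposable (being a free morphism induced by a function of sets), but the induced morphism P f* on the monoids of subsets (with product α₁α₂ = { u·v : u ∈ α₁, v ∈ α₂ } and unit {ε}) is not decomposable: with β = {aa}, β₁ = β₂ = {a}, α = {ab, ba}, we have β = β₁β₂ and f*[α] = β, but there are no subsets α₁, α₂ ⊆ {a,b}* with f*[α₁] = β₁, f*[α₂] = β₂, and α₁α₂ = α. -/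
private lemma split_aux : ∀ (u : List ℕ) (w : List Bool), w.length = u.sum →
    ∃ t : List (List Bool), t.map List.length = u ∧ t.flatten = w := by
  intro u
  induction u with
  | nil =>
    intro w hw
    refine ⟨[], rfl, ?_⟩
    simpa using (List.length_eq_zero_iff.mp (by simpa using hw)).symm
  | cons n u ih =>
    intro w hw
    have hn : n ≤ w.length := by simp [hw, List.sum_cons]
    obtain ⟨t, ht1, ht2⟩ := ih (w.drop n) (by simp [hw, List.sum_cons])
    exact ⟨w.take n :: t, by simp [ht1, List.length_take, min_eq_left hn],
      by simp [ht2]⟩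

private lemma len_one {x : List Bool} (h : x.length = 1) : ∃ a, x = [a] := by
  match x, h with
  | [a], _ => exact ⟨a, rfl⟩

/-- The powerset-of-monoid functor does not preserve decomposable monoid
morphisms.  Here `{a,b}*` is modelled by `List Bool`, `{a}* ≅ ℕ`, and the
collapse morphism `f*` is `List.length`.  `f*` is decomposable (first
conjunct), `{1}·{1} = {2}` in `P ℕ` and `f*[α] = {2}` for
`α = {ab, ba}` (second and third conjuncts), yet no subsets `α₁, α₂` satisfy
`f*[α₁] = f*[α₂] = {1}` and `α₁α₂ = α`. -/
theorem powerset_monoid_not_preserve_decomposable :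
    (∀ (w : List Bool) (u : List ℕ), w.length = u.sum →
      ∃ t : List (List Bool), t.map List.length = u ∧ t.flatten = w) ∧
    ({z : ℕ | ∃ u ∈ ({1} : Set ℕ), ∃ v ∈ ({1} : Set ℕ), z = u + v} = ({2} : Set ℕ)) ∧
    (List.length '' ({[true, false], [false, true]} : Set (List Bool)) = ({2} : Set ℕ)) ∧
    ¬ ∃ α₁ α₂ : Set (List Bool),
        List.length '' α₁ = ({1} : Set ℕ) ∧
        List.length '' α₂ = ({1} : Set ℕ) ∧
        {z : List Bool | ∃ u ∈ α₁, ∃ v ∈ α₂, z = u ++ v}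
          = ({[true, false], [false, true]} : Set (List Bool)) := by
  refine ⟨fun w u h => split_aux u w h, ?_, ?_, ?_⟩
  · ext z; simp
  · ext z
    simp only [Set.image_insert_eq, Set.image_singleton, Set.mem_insert_iff,
      Set.mem_singleton_iff, List.length]
    constructor
    · rintro (rfl | rfl) <;> rfl
    · rintro rfl; left; rfl
  · rintro ⟨α₁, α₂, h1, h2, h3⟩
    have mem1 : ∀ x ∈ α₁, x.length = 1 := by
      intro x hx
      have : x.length ∈ ({1} : Set ℕ) := h1 ▸ Set.mem_image_of_mem _ hx
      simpa using this
    have mem2 : ∀ x ∈ α₂, x.length = 1 := by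
      intro x hx
      have : x.length ∈ ({1} : Set ℕ) := h2 ▸ Set.mem_image_of_mem _ hx
      simpa using this
    -- [true,false] is in the product
    have htf : [true, false] ∈ {z : List Bool | ∃ u ∈ α₁, ∃ v ∈ α₂, z = u ++ v} := by
      rw [h3]; left; rfl
    have hft : [false, true] ∈ {z : List Bool | ∃ u ∈ α₁, ∃ v ∈ α₂, z = u ++ v} := by
      rw [h3]; right; rfl
    obtain ⟨u, hu, v, hv, huv⟩ := htf
    obtain ⟨u', hu', v', hv', huv'⟩ := hft
    obtain ⟨a, rfl⟩ := len_one (mem1 u hu)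
    obtain ⟨b, rfl⟩ := len_one (mem2 v hv)
    obtain ⟨c, rfl⟩ := len_one (mem1 u' hu')
    obtain ⟨d, rfl⟩ := len_one (mem2 v' hv')
    simp only [List.cons_append, List.nil_append, List.cons.injEq, and_true] at huv huv'
    obtain ⟨rfl, rfl⟩ := huv
    obtain ⟨rfl, rfl⟩ := huv'
    have : [true, true] ∈ {z : List Bool | ∃ u ∈ α₁, ∃ v ∈ α₂, z = u ++ v} :=
      ⟨[true], hu, [true], hv', rfl⟩
    rw [h3] at this
    simp at this
end

section
/- The distribution-of-monoid functor does not preserve decomposable monoid morphisms: with f* : {a,b}* → {a}* the length-preserving collapse morphism, the finitely-supported-distribution monoid D M (with convolution product (φψ)(m) = Σ_{uv=m} φ(u)ψ(v) and unit δ_ε) yields: δ_{aa} = δ_a · δ_a = (D f*)(δ_{ab}/2 + δ_{ba}/2), but there are no φ₁, φ₂ ∈ D({a,b}*) with (D f*)(φ₁) = δ_a, (D f*)(φ₂) = δ_a, and φ₁ · φ₂ = δ_{ab}/2 + δ_{ba}/2. -/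
/-- Generators `a`, `b` of the free monoid `{a,b}*`. -/
def wa : FreeMonoid Bool := FreeMonoid.of true
def wb : FreeMonoid Bool := FreeMonoid.of false

/-- The length-collapse monoid morphism `f* : {a,b}* → {a}* ≅ ℕ`. -/
def lenHom : FreeMonoid Bool →* Multiplicative ℕ :=
  FreeMonoid.lift (fun _ => Multiplicative.ofAdd (1 : ℕ))

lemma lenHom_eq (w : FreeMonoid Bool) : lenHom w = Multiplicative.ofAdd w.length := by
  induction w using FreeMonoid.recOn with
  | one => rfl
  | of_mul x xs ih =>
    show lenHom (FreeMonoid.of x * xs) = _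
    rw [map_mul, ih]
    show Multiplicative.ofAdd 1 * _ = _
    rw [← ofAdd_add]
    congr 1
    simp [FreeMonoid.length_mul, FreeMonoid.length_of, add_comm]

lemma le_mapDomain (φ : MonoidAlgebra ℝ (FreeMonoid Bool)) (h : ∀ w, 0 ≤ φ.coeff w)
    (w : FreeMonoid Bool) :
    φ.coeff w ≤ Finsupp.mapDomain (⇑lenHom) φ.coeff (lenHom w) := by
  rw [Finsupp.mapDomain, Finsupp.sum_apply, Finsupp.sum]
  have hnn : ∀ i ∈ φ.coeff.support, 0 ≤ Finsupp.single (lenHom i) (φ.coeff i) (lenHom w) := by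
    intro i _
    by_cases hi : lenHom i = lenHom w <;> simp [Finsupp.single_apply, hi, h i]
  by_cases hw : w ∈ φ.coeff.support
  · calc φ.coeff w = Finsupp.single (lenHom w) (φ.coeff w) (lenHom w) := by simp
    _ ≤ _ := Finset.single_le_sum hnn hw
  · simp only [Finsupp.notMem_support_iff] at hw
    rw [hw]
    exact Finset.sum_nonneg hnn

lemma supp_len1 (φ : MonoidAlgebra ℝ (FreeMonoid Bool)) (h : ∀ w, 0 ≤ φ.coeff w)
    (hm : Finsupp.mapDomain (⇑lenHom) φ.coeff
      = (MonoidAlgebra.single (Multiplicative.ofAdd (1 : ℕ)) (1 : ℝ)).coeff)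
    (w : FreeMonoid Bool) (hw : φ.coeff w ≠ 0) : w = wa ∨ w = wb := by
  have h1 : lenHom w = Multiplicative.ofAdd (1 : ℕ) := by
    by_contra hne
    have := le_mapDomain φ h w
    rw [hm] at this
    rw [MonoidAlgebra.single_apply, if_neg (fun e => hne e.symm)] at this
    exact hw (le_antisymm this (h w))
  rw [lenHom_eq] at h1
  have hl : w.length = 1 := Multiplicative.ofAdd.injective h1
  match w, hl with
  | [x], _ => cases x
              · right; rfl
              · left; rfl

instance : DecidableEq (FreeMonoid Bool) := inferInstanceAs (DecidableEq (List Bool))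

lemma wa_ne_wb : wa ≠ wb :=
  fun h => Bool.noConfusion (FreeMonoid.of_injective h)

lemma decomp (φ : MonoidAlgebra ℝ (FreeMonoid Bool))
    (hs : ∀ w, φ.coeff w ≠ 0 → w = wa ∨ w = wb) :
    φ = MonoidAlgebra.single wa (φ.coeff wa) + MonoidAlgebra.single wb (φ.coeff wb) := by
  ext w
  rw [MonoidAlgebra.coeff_add, MonoidAlgebra.coeff_single, MonoidAlgebra.coeff_single, Finsupp.add_apply]
  by_cases hwa : w = wa
  · subst hwa; simp [Finsupp.single_apply, wa_ne_wb.symm]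
  by_cases hwb : w = wb
  · subst hwb; simp [Finsupp.single_apply, wa_ne_wb]
  · have : φ.coeff w = 0 := by
      by_contra h
      rcases hs w h with h'|h' <;> [exact hwa h'; exact hwb h']
    simp [Finsupp.single_apply, this, Ne.symm hwa, Ne.symm hwb]


lemma ne_words : wa*wa ≠ wa*wb ∧ wa*wa ≠ wb*wa ∧ wa*wb ≠ wb*wa
    ∧ wa*wa ≠ wb*wb ∧ wa*wb ≠ wb*wb ∧ wb*wa ≠ wb*wb := by
  refine ⟨?_, ?_, ?_, ?_, ?_, ?_⟩ <;>
    · intro h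
      have := congrArg FreeMonoid.toList h
      simp [FreeMonoid.toList_mul, wa, wb] at this

/-- The distribution-of-monoid functor does not preserve decomposable monoid
morphisms: `δ_{aa} = δ_a · δ_a = (D f*)(δ_{ab}/2 + δ_{ba}/2)` in the
convolution monoid, but no distributions `φ₁, φ₂` on `{a,b}*` satisfy
`(D f*) φ₁ = (D f*) φ₂ = δ_a` and `φ₁ · φ₂ = δ_{ab}/2 + δ_{ba}/2`. -/
theorem distribution_monoid_not_preserve_decomposable :
    (MonoidAlgebra.single (Multiplicative.ofAdd (2 : ℕ)) (1 : ℝ)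
      = MonoidAlgebra.single (Multiplicative.ofAdd (1 : ℕ)) (1 : ℝ)
          * MonoidAlgebra.single (Multiplicative.ofAdd (1 : ℕ)) (1 : ℝ)) ∧
    (Finsupp.mapDomain (⇑lenHom)
        ((2⁻¹ : ℝ) • MonoidAlgebra.single (wa * wb) (1 : ℝ)
          + (2⁻¹ : ℝ) • MonoidAlgebra.single (wb * wa) (1 : ℝ)).coeff
      = (MonoidAlgebra.single (Multiplicative.ofAdd (2 : ℕ)) (1 : ℝ)).coeff) ∧
    ¬ ∃ φ₁ φ₂ : MonoidAlgebra ℝ (FreeMonoid Bool),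
        (∀ w, 0 ≤ φ₁.coeff w) ∧ (Finsupp.sum φ₁.coeff fun _ r => r) = 1 ∧
        (∀ w, 0 ≤ φ₂.coeff w) ∧ (Finsupp.sum φ₂.coeff fun _ r => r) = 1 ∧
        Finsupp.mapDomain (⇑lenHom) φ₁.coeff
          = (MonoidAlgebra.single (Multiplicative.ofAdd (1 : ℕ)) (1 : ℝ)).coeff ∧
        Finsupp.mapDomain (⇑lenHom) φ₂.coeff
          = (MonoidAlgebra.single (Multiplicative.ofAdd (1 : ℕ)) (1 : ℝ)).coeff ∧
        φ₁ * φ₂ = (2⁻¹ : ℝ) • MonoidAlgebra.single (wa * wb) (1 : ℝ)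
          + (2⁻¹ : ℝ) • MonoidAlgebra.single (wb * wa) (1 : ℝ) := by
  refine ⟨?_, ?_, ?_⟩
  · rw [MonoidAlgebra.single_mul_single]
    norm_num
    rfl
  · rw [MonoidAlgebra.coeff_add, MonoidAlgebra.coeff_smul, MonoidAlgebra.coeff_smul,
      MonoidAlgebra.coeff_single, MonoidAlgebra.coeff_single, MonoidAlgebra.coeff_single,
      Finsupp.mapDomain_add, Finsupp.mapDomain_smul, Finsupp.mapDomain_smul,
      Finsupp.mapDomain_single, Finsupp.mapDomain_single]
    have e1 : lenHom (wa * wb) = Multiplicative.ofAdd (2:ℕ) := by rw [lenHom_eq]; rfl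
    have e2 : lenHom (wb * wa) = Multiplicative.ofAdd (2:ℕ) := by rw [lenHom_eq]; rfl
    rw [e1, e2, ← add_smul]
    norm_num
  · rintro ⟨φ₁, φ₂, h1n, -, h2n, -, hm1, hm2, hp⟩
    obtain ⟨n1, n2, n3, n4, n5, n6⟩ := ne_words
    rw [decomp φ₁ (supp_len1 φ₁ h1n hm1), decomp φ₂ (supp_len1 φ₂ h2n hm2)] at hp
    rw [add_mul, mul_add, mul_add, MonoidAlgebra.single_mul_single,
      MonoidAlgebra.single_mul_single, MonoidAlgebra.single_mul_single,
      MonoidAlgebra.single_mul_single] at hp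
    have hp' : (Finsupp.single (wa*wa) (φ₁.coeff wa * φ₂.coeff wa) + Finsupp.single (wa*wb) (φ₁.coeff wa * φ₂.coeff wb)
        + (Finsupp.single (wb*wa) (φ₁.coeff wb * φ₂.coeff wa) + Finsupp.single (wb*wb) (φ₁.coeff wb * φ₂.coeff wb))
          : FreeMonoid Bool →₀ ℝ)
        = (2⁻¹ : ℝ) • Finsupp.single (wa*wb) (1:ℝ) + (2⁻¹ : ℝ) • Finsupp.single (wb*wa) (1:ℝ) := congrArg MonoidAlgebra.coeff hp
    have haa := Finsupp.ext_iff.mp hp' (wa*wa)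
    have hab := Finsupp.ext_iff.mp hp' (wa*wb)
    have hba := Finsupp.ext_iff.mp hp' (wb*wa)
    simp only [Finsupp.add_apply, Finsupp.smul_apply, Finsupp.single_apply, smul_eq_mul] at haa hab hba
    simp only [if_true, if_neg (Ne.symm n1), if_neg n1, if_neg (Ne.symm n2), if_neg n2,
      if_neg n3, if_neg (Ne.symm n3), if_neg n4, if_neg (Ne.symm n4), if_neg n5,
      if_neg (Ne.symm n5), if_neg n6, if_neg (Ne.symm n6), add_zero, zero_add,
      mul_one, mul_zero] at haa hab hba
    rcases mul_eq_zero.mp haa with h | h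
    · rw [h, zero_mul] at hab; norm_num at hab
    · rw [h, mul_zero] at hba; norm_num at hba
end

section
/- In the category of commutative monoids, the multiset (free commutative monoid) functor M does not preserve decomposable morphisms: let f : {a,b}^⊛ → ℕ be the morphism from the free commutative monoid on {a,b} induced by a,b ↦ 1 (total length), and equip M({a,b}^⊛) with the addition (Σα_i·m_i) ⊕ (Σβ_j·n_j) = Σ α_iβ_j·(m_i ⊕ n_j). Then there are no multisets α₁, α₂ ∈ M({a,b}^⊛) with (M f)(α₁) = 1·[1], (M f)(α₂) = 2·[1], and α₁ ⊕ α₂ = 1·(a⊕a) + 1·(b⊕b), even though (M f)(1·(a⊕a) + 1·(b⊕b)) equals (1·[1]) ⊕ (2·[1]). -/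
/-- In commutative monoids, the multiset functor `M` does not preserve
decomposable morphisms: with `f = total multiplicity : {a,b}^⊛ → ℕ`
(`Multiset.card` on `Multiset Bool`), the multiset `1·(a⊕a) + 1·(b⊕b)` maps
under `M f` to `(1·[1]) ⊕ (2·[1])`, but it admits no decomposition
`α₁ ⊕ α₂` with `(M f) α₁ = 1·[1]` and `(M f) α₂ = 2·[1]`. -/
theorem multiset_functor_not_preserve_decomposable :
    (Multiset.map Multiset.card
        ({({true, true} : Multiset Bool), ({false, false} : Multiset Bool)} :
          Multiset (Multiset Bool))
      = Multiset.bind ({1} : Multiset ℕ)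
          (fun x => Multiset.map (fun y => x + y) ({1, 1} : Multiset ℕ))) ∧
    ¬ ∃ α₁ α₂ : Multiset (Multiset Bool),
        Multiset.map Multiset.card α₁ = ({1} : Multiset ℕ) ∧
        Multiset.map Multiset.card α₂ = ({1, 1} : Multiset ℕ) ∧
        Multiset.bind α₁ (fun x => Multiset.map (fun y => x + y) α₂)
          = ({({true, true} : Multiset Bool), ({false, false} : Multiset Bool)} :
              Multiset (Multiset Bool)) := by
  constructor
  · decide
  · rintro ⟨α₁, α₂, h1, h2, h3⟩
    -- α₁ is a singleton {a} with card a = 1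
    obtain ⟨a, rfl, ha⟩ := Multiset.map_eq_singleton.mp h1
    obtain ⟨x, rfl⟩ := Multiset.card_eq_one.mp ha
    -- α₂ has two elements
    have hc2 : Multiset.card α₂ = 2 := by
      have := congrArg Multiset.card h2
      simpa using this
    obtain ⟨b, c, rfl⟩ := Multiset.card_eq_two.mp hc2
    have h2' : ({Multiset.card b, Multiset.card c} : Multiset ℕ) = {1, 1} := by
      simpa using h2
    have hb : Multiset.card b = 1 ∧ Multiset.card c = 1 := by
      have := Multiset.cons_eq_cons.mp h2'
      rcases this with ⟨h, h'⟩ | ⟨_, cs, h, h'⟩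
      · constructor
        · exact h
        · simpa using h'
      · constructor
        · have : Multiset.card b ∈ ({1,1} : Multiset ℕ) := by
            rw [← h2']; exact Multiset.mem_cons_self _ _
          simpa using this
        · have : Multiset.card c ∈ ({1,1} : Multiset ℕ) := by
            rw [← h2']; exact Multiset.mem_cons_of_mem (Multiset.mem_cons_self _ _)
          simpa using this
      
    obtain ⟨y, rfl⟩ := Multiset.card_eq_one.mp hb.1
    obtain ⟨z, rfl⟩ := Multiset.card_eq_one.mp hb.2
    simp [Multiset.bind, Multiset.join] at h3
    cases x <;> cases y <;> cases z <;>
      simp_all [Multiset.cons_eq_cons, Multiset.singleton_add]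
end

section
/- Over a commutative unital semiring S, if there exist w, x, y, z ∈ S with w + x = 1, y + z = 1 + 1, wy = 0, wz = 1, xy = 1, xz = 0, then 1 = 0 in S (i.e. S is the trivial semiring). -/
/-- Over a commutative unital semiring `S`, the system
`w + x = 1`, `y + z = 1 + 1`, `wy = 0`, `wz = 1`, `xy = 1`, `xz = 0`
forces `1 = 0`, i.e. `S` is trivial. -/
theorem semiring_system_trivial {S : Type*} [CommSemiring S] (w x y z : S)
    (h1 : w + x = 1) (h2 : y + z = 1 + 1) (h3 : w * y = 0) (h4 : w * z = 1)
    (h5 : x * y = 1) (h6 : x * z = 0) : (1 : S) = 0 := by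
  have hy : y = 1 := by
    calc y = (w + x) * y := by rw [h1, one_mul]
    _ = w * y + x * y := by ring
    _ = 1 := by rw [h3, h5, zero_add]
  have hw0 : w = 0 := by rw [← mul_one w, ← hy, h3]
  have hw1 : w = 1 := by rw [← h4, hw0, zero_mul]
  rw [← hw1, hw0]
end
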